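/- arXiv:2104.08933 — 9 statements merged into one kernel-verified Lean document; each statement's English description precedes it below -/
import Mathlib

section
/- If a connected simple graph G has diameter at least 3, then for every integer s ≥ 1 the complement of the jet graph J_s(G) contains an induced cycle of length 4; in particular J_s(G) is not co-chordal. -/
/-- The jet graph of order `s` of a simple graph `G`: vertices are pairs `(v, i)`
with `i ∈ {0,…,s}`, and `(a,i)` is adjacent to `(b,j)` iff `G.Adj a b` and `i + j ≤ s`. -/
def jetGraph {V : Type*} (G : SimpleGraph V) (s : ℕ) : SimpleGraph (V × Fin (s + 1)) where
  Adj p q := G.Adj p.1 q.1 ∧ p.2.val + q.2.val ≤ s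
  symm := by
    constructor
    intro p q h
    exact ⟨h.1.symm, by omega⟩
  loopless := by
    constructor
    intro p h
    exact G.irrefl h.1

/-- `a b c d` form an induced 4-cycle in `H` (in this cyclic order). -/
def IsInducedCycle4 {W : Type*} (H : SimpleGraph W) (a b c d : W) : Prop :=
  a ≠ b ∧ a ≠ c ∧ a ≠ d ∧ b ≠ c ∧ b ≠ d ∧ c ≠ d ∧
  H.Adj a b ∧ H.Adj b c ∧ H.Adj c d ∧ H.Adj d a ∧ ¬ H.Adj a c ∧ ¬ H.Adj b d

/-- A graph is chordal if it has no induced cycle of length at least 4. -/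
def IsChordal {W : Type*} (H : SimpleGraph W) : Prop :=
  ∀ n : ℕ, 4 ≤ n → ¬ ∃ f : ZMod n → W, Function.Injective f ∧
    ∀ i j : ZMod n, H.Adj (f i) (f j) ↔ (j = i + 1 ∨ i = j + 1)

/-!
Pick `u, v` with `G.dist u v ≥ 3`, a neighbour `x` of `u` and a neighbour `y` of `v`. In `J_s(G)`
the vertices `(u,0)`, `(x,s)` and `(v,0)`, `(y,s)` span two edges, and no other pair among the four
is adjacent: `(x,s)` and `(y,s)` because `s + s > s`, the three remaining pairs because
`u, v` lie at distance at least `3`. Such an induced `2K₂` is an induced `C₄` in the complement.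
-/

lemma IsInducedCycle4.not_isChordal {W : Type*} {H : SimpleGraph W} {a b c d : W}
    (h : IsInducedCycle4 H a b c d) : ¬ IsChordal H := by
  obtain ⟨hab, hac, had, hbc, hbd, hcd, hab', hbc', hcd', hda', hac', hbd'⟩ := h
  let f : Fin 4 → W := ![a, b, c, d]
  refine fun hH => hH 4 le_rfl ⟨f, ?_, ?_⟩
  · change ∀ i j : Fin 4, f i = f j → i = j
    intro i j
    fin_cases i <;> fin_cases j <;> simp_all [f, eq_comm]
  · change ∀ i j : Fin 4, H.Adj (f i) (f j) ↔ (j = i + 1 ∨ i = j + 1)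
    intro i j
    fin_cases i <;> fin_cases j <;> simp_all [f, H.adj_comm]

lemma isInducedCycle4_compl_of_induced_two_edges {W : Type*} {H : SimpleGraph W} {a b c d : W}
    (hab : a ≠ b) (hbc : b ≠ c) (hcd : c ≠ d) (hda : d ≠ a)
    (hac : H.Adj a c) (hbd : H.Adj b d)
    (hab' : ¬ H.Adj a b) (hbc' : ¬ H.Adj b c) (hcd' : ¬ H.Adj c d) (hda' : ¬ H.Adj d a) :
    IsInducedCycle4 Hᶜ a b c d :=
  ⟨hab, hac.ne, hda.symm, hbc, hbd.ne, hcd, ⟨hab, hab'⟩, ⟨hbc, hbc'⟩, ⟨hcd, hcd'⟩, ⟨hda, hda'⟩,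
    fun h => h.2 hac, fun h => h.2 hbd⟩

lemma SimpleGraph.exists_induced_two_edges_of_three_le_dist {V : Type*} {G : SimpleGraph V}
    {u v : V} (h : 3 ≤ G.dist u v) :
    ∃ x y, G.Adj u x ∧ G.Adj v y ∧ u ≠ v ∧ ¬ G.Adj u v ∧ ¬ G.Adj v x ∧ ¬ G.Adj y u := by
  obtain ⟨p, hp⟩ := G.exists_walk_of_dist_ne_zero (u := u) (v := v) (by omega)
  have hp_not_nil : ¬ p.Nil := by grind [Walk.Nil.length_eq_zero]
  have hx : G.Adj u p.snd := p.adj_snd hp_not_nil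
  have hy : G.Adj v p.penultimate := (p.adj_penultimate hp_not_nil).symm
  refine ⟨_, _, hx, hy, ?_, fun huv => ?_, fun hvx => ?_, fun hyu => ?_⟩
  · rintro rfl
    simp at h
  · have : G.dist u v ≤ 1 := dist_le huv.toWalk
    omega
  · have : G.dist u v ≤ 2 := dist_le (hx.toWalk.concat hvx.symm)
    omega
  · have : G.dist u v ≤ 2 := dist_le (hyu.symm.toWalk.concat hy.symm)
    omega

lemma isInducedCycle4_compl_jetGraph {V : Type*} {G : SimpleGraph V} {s : ℕ} (hs : 1 ≤ s)
    {u v x y : V} (hux : G.Adj u x) (hvy : G.Adj v y) (huv : u ≠ v) (huv' : ¬ G.Adj u v)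
    (hvx : ¬ G.Adj v x) (hyu : ¬ G.Adj y u) :
    IsInducedCycle4 (jetGraph G s)ᶜ (u, 0) (v, 0) (x, Fin.last s) (y, Fin.last s) := by
  have h0s : (0 : Fin (s + 1)) ≠ Fin.last s := by
    rw [ne_eq, Fin.ext_iff, Fin.val_zero, Fin.val_last]; omega
  have hxy : x ≠ y := by rintro rfl; exact hyu hux.symm
  apply isInducedCycle4_compl_of_induced_two_edges <;> simp [jetGraph, *, h0s.symm]
  omega

theorem jetGraph_not_cochordal_of_diam_ge_three_general {V : Type*} (G : SimpleGraph V)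
    (hdiam : 3 ≤ G.diam) :
    ∀ s : ℕ, 1 ≤ s →
      (∃ a b c d : V × Fin (s + 1), IsInducedCycle4 ((jetGraph G s)ᶜ) a b c d) ∧
      ¬ IsChordal ((jetGraph G s)ᶜ) := by
  intro s hs
  have : Nontrivial V := G.nontrivial_of_diam_ne_zero (by omega)
  obtain ⟨u, v, huv⟩ := G.exists_dist_eq_diam
  obtain ⟨x, y, hux, hvy, hne, huv', hvx, hyu⟩ :=
    G.exists_induced_two_edges_of_three_le_dist (huv ▸ hdiam)
  have hC4 := isInducedCycle4_compl_jetGraph hs hux hvy hne huv' hvx hyu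
  exact ⟨⟨_, _, _, _, hC4⟩, hC4.not_isChordal⟩

theorem jetGraph_not_cochordal_of_diam_ge_three {V : Type*} (G : SimpleGraph V)
    (hG : G.Connected) (hdiam : 3 ≤ G.diam) :
    ∀ s : ℕ, 1 ≤ s →
      (∃ a b c d : V × Fin (s + 1), IsInducedCycle4 ((jetGraph G s)ᶜ) a b c d) ∧
      ¬ IsChordal ((jetGraph G s)ᶜ) :=
  jetGraph_not_cochordal_of_diam_ge_three_general G hdiam
end

section
/- If a, b, c, d are vertices of a connected simple graph G such that a shortest path from a to d has exactly three edges {a,b}, {b,c}, {c,d}, then for every integer s ≥ 1 the vertices (a,0), (d,0), (b,s), (c,s) form an induced 4-cycle (a,0)-(d,0)-(b,s)-(c,s)-(a,0) in the complement of J_s(G). -/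
namespace SimpleGraph

variable {V : Type*} {G : SimpleGraph V} {u v w : V}

lemma not_adj_of_one_lt_dist (h : 1 < G.dist u v) : ¬G.Adj u v := fun huv =>
  (dist_le huv.toWalk).not_gt h

lemma not_adj_of_adj_of_two_lt_dist (hvw : G.Adj v w) (h : 2 < G.dist u w) : ¬G.Adj u v :=
  fun huv => (dist_le (huv.toWalk.append hvw.toWalk)).not_gt h

lemma jetGraph_adj {s : ℕ} {p q : V × Fin (s + 1)} :
    (jetGraph G s).Adj p q ↔ G.Adj p.1 q.1 ∧ p.2.val + q.2.val ≤ s :=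
  Iff.rfl

lemma jetGraph_adj_zero_last {s : ℕ} (h : G.Adj u v) :
    (jetGraph G s).Adj (u, 0) (v, Fin.last s) :=
  jetGraph_adj.2 ⟨h, by simp⟩

lemma compl_jetGraph_adj_of_not_adj {s : ℕ} {p q : V × Fin (s + 1)} (hne : p ≠ q)
    (h : ¬G.Adj p.1 q.1) : (jetGraph G s)ᶜ.Adj p q :=
  (compl_adj _ _ _).2 ⟨hne, fun hj => h hj.1⟩

lemma compl_jetGraph_adj_of_lt_add {s : ℕ} {p q : V × Fin (s + 1)} (hne : p ≠ q)
    (h : s < p.2.val + q.2.val) : (jetGraph G s)ᶜ.Adj p q :=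
  (compl_adj _ _ _).2 ⟨hne, fun hj => (jetGraph_adj.1 hj).2.not_gt h⟩

end SimpleGraph

open SimpleGraph

theorem jetGraph_compl_induced_C4_general {V : Type*} (G : SimpleGraph V)
    (a b c d : V) (hab : G.Adj a b) (hbc : G.Adj b c) (hcd : G.Adj c d)
    (hdist : G.dist a d = 3) (s : ℕ) (hs : 1 ≤ s) :
    IsInducedCycle4 ((jetGraph G s)ᶜ)
      (a, 0) (d, 0) (b, Fin.last s) (c, Fin.last s) := by
  have had : ¬G.Adj a d := not_adj_of_one_lt_dist (by omega)
  have hac : ¬G.Adj a c := not_adj_of_adj_of_two_lt_dist hcd (by omega)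
  have hdb : ¬G.Adj d b := not_adj_of_adj_of_two_lt_dist hab.symm (by rw [dist_comm]; omega)
  have hane : a ≠ d := fun h => by simp [h] at hdist
  have hzero : (0 : Fin (s + 1)) ≠ Fin.last s := by
    simp only [ne_eq, Fin.ext_iff, Fin.val_zero, Fin.val_last]
    omega
  have hne_ad : ((a, 0) : V × Fin (s + 1)) ≠ (d, 0) := mt (congrArg Prod.fst) hane
  have hne_bc : ((b, Fin.last s) : V × Fin (s + 1)) ≠ (c, Fin.last s) :=
    mt (congrArg Prod.fst) hbc.ne
  have hne_db : ((d, 0) : V × Fin (s + 1)) ≠ (b, Fin.last s) := mt (congrArg Prod.snd) hzero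
  have hne_ac : ((a, 0) : V × Fin (s + 1)) ≠ (c, Fin.last s) := mt (congrArg Prod.snd) hzero
  refine ⟨hne_ad, mt (congrArg Prod.snd) hzero, hne_ac, hne_db, mt (congrArg Prod.snd) hzero,
    hne_bc, ?_, ?_, ?_, ?_, ?_, ?_⟩
  · exact compl_jetGraph_adj_of_not_adj hne_ad had
  · exact compl_jetGraph_adj_of_not_adj hne_db hdb
  · exact compl_jetGraph_adj_of_lt_add hne_bc (by simp only [Fin.val_last]; omega)
  · exact compl_jetGraph_adj_of_not_adj hne_ac.symm (fun h => hac h.symm)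
  · exact fun h => h.2 (jetGraph_adj_zero_last hab)
  · exact fun h => h.2 (jetGraph_adj_zero_last hcd.symm)

theorem jetGraph_compl_induced_C4 {V : Type*} (G : SimpleGraph V) (hG : G.Connected)
    (a b c d : V) (hab : G.Adj a b) (hbc : G.Adj b c) (hcd : G.Adj c d)
    (hdist : G.dist a d = 3) (s : ℕ) (hs : 1 ≤ s) :
    IsInducedCycle4 ((jetGraph G s)ᶜ)
      (a, 0) (d, 0) (b, Fin.last s) (c, Fin.last s) :=
  jetGraph_compl_induced_C4_general G a b c d hab hbc hcd hdist s hs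
end

section
/- For all integers n ≥ 2 and s ≥ 0, the complement of the jet graph J_s(K_n) of the complete graph on n vertices is chordal, i.e., J_s(K_n) is co-chordal. -/
/-!
Two distinct vertices of the complement of `J_s(K_n)` are adjacent iff they have the same first
coordinate or their levels sum to more than `s`. In a graph of this shape, with arbitrary colours
and weights, call an edge of an induced cycle of length `≥ 4` heavy if its weights sum to more
than `s`. Vertices two apart on the cycle are non-adjacent, so they have different colours and
weights summing to at most `s`. Hence no two consecutive edges both join equal colours, i.e. of
any two consecutive edges one is heavy, which forces two heavy edges `v₀v₁` and `v₂v₃`. Then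
`2s < w₀ + w₁ + w₂ + w₃ = (w₀ + w₂) + (w₁ + w₃) ≤ 2s`.
-/

theorem exists_and_add_two_of_forall_or_add_one {M : Type*} [AddCommMonoidWithOne M]
    {P : M → Prop} (h : ∀ i, P i ∨ P (i + 1)) : ∃ i, P i ∧ P (i + 2) := by
  have of_mem : ∀ j, P j → ∃ i, P i ∧ P (i + 2) := by
    intro j hj
    by_cases hj2 : P (j + 2)
    · exact ⟨j, hj, hj2⟩
    have hj1 : P (j + 1) := (h (j + 1)).resolve_right (by rwa [add_assoc, one_add_one_eq_two])
    have hj3 : P (j + 2 + 1) := (h (j + 2)).resolve_left hj2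
    exact ⟨j + 1, hj1, by rwa [add_right_comm]⟩
  rcases h 0 with h0 | h1
  exacts [of_mem 0 h0, of_mem _ h1]

theorem ZMod.natCast_ne_zero_of_pos_of_lt {m k : ℕ} (hk : 0 < k) (hkm : k < m) :
    (k : ZMod m) ≠ 0 := by
  rw [Ne, ZMod.natCast_eq_zero_iff]
  exact fun hdvd => (Nat.le_of_dvd hk hdvd).not_gt hkm

section InducedCycle

variable {W : Type*} {H : SimpleGraph W} {m : ℕ} {f : ZMod m → W}

theorem ne_add_two_of_injective (hm : 4 ≤ m) (hf : Function.Injective f) (i : ZMod m) :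
    f i ≠ f (i + 2) := by
  have h2 : ((2 : ℕ) : ZMod m) ≠ 0 := ZMod.natCast_ne_zero_of_pos_of_lt (by omega) (by omega)
  refine hf.ne fun h => h2 ?_
  push_cast
  linear_combination -h

theorem not_adj_add_two_of_adj_iff (hm : 4 ≤ m)
    (hcyc : ∀ i j, H.Adj (f i) (f j) ↔ (j = i + 1 ∨ i = j + 1)) (i : ZMod m) :
    ¬ H.Adj (f i) (f (i + 2)) := by
  have h1 : ((1 : ℕ) : ZMod m) ≠ 0 := ZMod.natCast_ne_zero_of_pos_of_lt (by omega) (by omega)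
  have h3 : ((3 : ℕ) : ZMod m) ≠ 0 := ZMod.natCast_ne_zero_of_pos_of_lt (by omega) (by omega)
  rw [hcyc]
  rintro (h | h)
  · exact h1 (by push_cast; linear_combination h)
  · exact h3 (by push_cast; linear_combination -h)

end InducedCycle

theorem isChordal_of_adj_iff {W α R : Type*} [AddCommMonoid R] [LinearOrder R]
    [IsOrderedCancelAddMonoid R] {H : SimpleGraph W} (c : W → α) (w : W → R) (s : R)
    (hH : ∀ p q, H.Adj p q ↔ p ≠ q ∧ (c p = c q ∨ s < w p + w q)) : IsChordal H := by
  rintro m hm ⟨f, hf, hcyc⟩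
  have hedge : ∀ i, c (f i) = c (f (i + 1)) ∨ s < w (f i) + w (f (i + 1)) :=
    fun i => ((hH _ _).1 ((hcyc _ _).2 (Or.inl rfl))).2
  have hnon : ∀ i, c (f i) ≠ c (f (i + 2)) ∧ w (f i) + w (f (i + 2)) ≤ s := by
    intro i
    have hna := not_adj_add_two_of_adj_iff hm hcyc i
    rw [hH, not_and, not_or, not_lt] at hna
    exact hna (ne_add_two_of_injective hm hf i)
  have hheavy : ∀ i, s < w (f i) + w (f (i + 1)) ∨ s < w (f (i + 1)) + w (f (i + 1 + 1)) := by
    intro i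
    by_contra! hlight
    have e₀₁ := (hedge i).resolve_right (not_lt.2 hlight.1)
    have e₁₂ := (hedge (i + 1)).resolve_right (not_lt.2 hlight.2)
    rw [add_assoc, one_add_one_eq_two] at e₁₂
    exact (hnon i).1 (e₀₁.trans e₁₂)
  obtain ⟨i, h₀₁, h₂₃⟩ := exists_and_add_two_of_forall_or_add_one hheavy
  have h₁₃ := (hnon (i + 1)).2
  rw [add_right_comm] at h₁₃
  have hsum := add_lt_add h₀₁ h₂₃
  rw [add_add_add_comm] at hsum
  exact (add_le_add (hnon i).2 h₁₃).not_gt hsum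

theorem compl_jetGraph_top_adj {V : Type*} {s : ℕ} (p q : V × Fin (s + 1)) :
    (jetGraph ⊤ s)ᶜ.Adj p q ↔ p ≠ q ∧ (p.1 = q.1 ∨ s < p.2.val + q.2.val) := by
  simp only [SimpleGraph.compl_adj, jetGraph, SimpleGraph.top_adj, not_and_or, not_not, not_le]

theorem jetGraph_complete_cochordal_general (n s : ℕ) :
    IsChordal ((jetGraph (⊤ : SimpleGraph (Fin n)) s)ᶜ) :=
  isChordal_of_adj_iff Prod.fst (fun p => p.2.val) s compl_jetGraph_top_adj

theorem jetGraph_complete_cochordal (n s : ℕ) (hn : 2 ≤ n) :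
    IsChordal ((jetGraph (⊤ : SimpleGraph (Fin n)) s)ᶜ) :=
  jetGraph_complete_cochordal_general n s
end

section
/- Order the vertices of the complement of J_s(K_n) by (x_i, t) < (x_j, u) iff t < u, or t = u and i < j. Then this total order is a simplicial (perfect elimination) order: for each vertex v, the neighbors of v among the vertices ≥ v induce a complete subgraph. -/
/-- The order on vertices of `Jₛ(Kₙ)ᶜ`: `(xᵢ,t) ≤ (xⱼ,u)` iff `t < u`, or `t = u` and `i ≤ j`. -/
def jetOrderLE {n s : ℕ} (v w : Fin n × Fin (s + 1)) : Prop :=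
  v.2.val < w.2.val ∨ (v.2 = w.2 ∧ v.1.val ≤ w.1.val)

theorem jetGraph_top_compl_adj {V : Type*} {s : ℕ} {p q : V × Fin (s + 1)} :
    ((jetGraph (⊤ : SimpleGraph V) s)ᶜ).Adj p q ↔
      p ≠ q ∧ (p.1 = q.1 ∨ s < p.2.val + q.2.val) := by
  simp only [SimpleGraph.compl_adj, jetGraph, SimpleGraph.top_adj, not_and_or, not_not, not_le]

theorem jetOrderLE.snd_le {n s : ℕ} {v w : Fin n × Fin (s + 1)} (h : jetOrderLE v w) :
    v.2 ≤ w.2 := by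
  rcases h with h | ⟨h, -⟩
  · exact h.le
  · exact h.le

theorem jetGraph_top_compl_adj_of_snd_le {V : Type*} {s : ℕ} {v w z : V × Fin (s + 1)}
    (hvw : v.2 ≤ w.2) (hvz : v.2 ≤ z.2) (hwz : w ≠ z)
    (hw : ((jetGraph (⊤ : SimpleGraph V) s)ᶜ).Adj v w)
    (hz : ((jetGraph (⊤ : SimpleGraph V) s)ᶜ).Adj v z) :
    ((jetGraph (⊤ : SimpleGraph V) s)ᶜ).Adj w z := by
  rw [jetGraph_top_compl_adj] at hw hz ⊢
  refine ⟨hwz, or_iff_not_imp_left.2 fun hne => ?_⟩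
  have hvw' : (v.2 : ℕ) ≤ w.2 := hvw
  have hvz' : (v.2 : ℕ) ≤ z.2 := hvz
  by_cases hv : v.1 = w.1
  · have hsz : s < v.2.val + z.2.val := hz.2.resolve_left fun h => hne (hv ▸ h)
    omega
  · have hsw : s < v.2.val + w.2.val := hw.2.resolve_left hv
    omega

theorem jetGraph_complete_simplicial_order (n s : ℕ) :
    ∀ v w z : Fin n × Fin (s + 1),
      jetOrderLE v w → jetOrderLE v z → w ≠ z →
      ((jetGraph (⊤ : SimpleGraph (Fin n)) s)ᶜ).Adj v w →
      ((jetGraph (⊤ : SimpleGraph (Fin n)) s)ᶜ).Adj v z →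
      ((jetGraph (⊤ : SimpleGraph (Fin n)) s)ᶜ).Adj w z :=
  fun _ _ _ hvw hvz hwz =>
    jetGraph_top_compl_adj_of_snd_le hvw.snd_le hvz.snd_le hwz
end

section
/- For all integers n ≥ 2 and s ≥ 0, the complement of the jet graph J_s(K_{1,n}) of the star graph is chordal, i.e., J_s(K_{1,n}) is co-chordal. -/
/-- The star graph `K_{1,n}` with internal vertex `0` and leaves `1,…,n`. -/
def starGraph (n : ℕ) : SimpleGraph (Fin (n + 1)) where
  Adj a b := a ≠ b ∧ (a = 0 ∨ b = 0)
  symm := by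
    constructor
    intro a b h
    exact ⟨h.1.symm, h.2.symm⟩
  loopless := by
    constructor
    intro a h
    exact h.1 rfl

/-! In a cycle `v₀ v₁ … v_{m-1}` induced in the complement of `H`, every two non-consecutive
vertices are adjacent in `H`. For the jet graph `H` of a star this is impossible: `H` is
bipartite (centre copies versus leaf copies), which rules out `m ≥ 5` because non-consecutive
pairs then contain an odd cycle (`v₀ v₂ v₄` for `m ≥ 6`, `v₀ v₂ v₄ v₁ v₃` for `m = 5`); and
adjacency across the bipartition is the threshold condition `i + j ≤ s` on the jet levels, so
`H` has no induced `2K₂`, which is what the complement of a `4`-cycle would be. -/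

variable {W : Type*}

def IsInducedCycle (H : SimpleGraph W) (m : ℕ) (f : ZMod m → W) : Prop :=
  Function.Injective f ∧ ∀ i j : ZMod m, H.Adj (f i) (f j) ↔ (j = i + 1 ∨ i = j + 1)

namespace IsInducedCycle

variable {H : SimpleGraph W} {m : ℕ} {f : ZMod m → W}

lemma adj_of_compl (hf : IsInducedCycle Hᶜ m f) {i j : ZMod m} (hij : i ≠ j)
    (hnc : ¬(j = i + 1 ∨ i = j + 1)) : H.Adj (f i) (f j) := by
  have h := mt (hf.2 i j).1 hnc
  rw [SimpleGraph.compl_adj, not_and, not_not] at h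
  exact h (hf.1.ne hij)

lemma not_adj_of_compl (hf : IsInducedCycle Hᶜ m f) {i j : ZMod m}
    (hc : j = i + 1 ∨ i = j + 1) : ¬H.Adj (f i) (f j) :=
  ((hf.2 i j).2 hc).2

lemma adj_natCast_of_compl (hf : IsInducedCycle Hᶜ m f) {a b : ℕ} (hab : a + 2 ≤ b)
    (hbm : b + 1 < m) : H.Adj (f a) (f b) := by
  have hcast : ∀ {x y : ℕ}, x < m → y < m → ((x : ZMod m) = y ↔ x = y) := fun hx hy => by
    rw [ZMod.natCast_eq_natCast_iff', Nat.mod_eq_of_lt hx, Nat.mod_eq_of_lt hy]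
  refine hf.adj_of_compl (fun h => ?_) ?_
  · have := (hcast (by omega) (by omega)).1 h
    omega
  · rintro (h | h)
    all_goals
      push_cast [← Nat.cast_succ] at h
      have := (hcast (by omega) (by omega)).1 h
      omega

end IsInducedCycle

lemma Bool.eq_of_ne_of_ne {x y z : Bool} (hxy : x ≠ y) (hyz : y ≠ z) : x = z := by
  revert x y z
  decide

lemma not_isInducedCycle_compl_of_bipartite {H : SimpleGraph W} (c : W → Bool)
    (hc : ∀ a b, H.Adj a b → c a ≠ c b) {m : ℕ} (hm : 5 ≤ m) (f : ZMod m → W) :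
    ¬IsInducedCycle Hᶜ m f := by
  intro hf
  rcases hm.eq_or_lt with rfl | hm6
  · have h02 := hc _ _ (hf.adj_of_compl (i := 0) (j := 2) (by decide) (by decide))
    have h24 := hc _ _ (hf.adj_of_compl (i := 2) (j := 4) (by decide) (by decide))
    have h41 := hc _ _ (hf.adj_of_compl (i := 4) (j := 1) (by decide) (by decide))
    have h13 := hc _ _ (hf.adj_of_compl (i := 1) (j := 3) (by decide) (by decide))
    have h30 := hc _ _ (hf.adj_of_compl (i := 3) (j := 0) (by decide) (by decide))
    exact h30 ((Bool.eq_of_ne_of_ne h02 h24).trans (Bool.eq_of_ne_of_ne h41 h13)).symm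
  · have h02 := hc _ _ (hf.adj_natCast_of_compl (a := 0) (b := 2) le_rfl (by omega))
    have h24 := hc _ _ (hf.adj_natCast_of_compl (a := 2) (b := 4) le_rfl (by omega))
    have h04 := hc _ _ (hf.adj_natCast_of_compl (a := 0) (b := 4) (by omega) (by omega))
    exact h04 (Bool.eq_of_ne_of_ne h02 h24)

def IsInduced2K2Free (H : SimpleGraph W) : Prop :=
  ∀ a b c d, H.Adj a b → H.Adj c d → H.Adj a c ∨ H.Adj a d ∨ H.Adj b c ∨ H.Adj b d

lemma not_isInducedCycle_compl_four {H : SimpleGraph W} (hH : IsInduced2K2Free H)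
    (f : ZMod 4 → W) : ¬IsInducedCycle Hᶜ 4 f := by
  intro hf
  have h02 := hf.adj_of_compl (i := 0) (j := 2) (by decide) (by decide)
  have h13 := hf.adj_of_compl (i := 1) (j := 3) (by decide) (by decide)
  rcases hH _ _ _ _ h02 h13 with h | h | h | h <;> exact hf.not_adj_of_compl (by decide) h

section Threshold

variable {H : SimpleGraph W} {c : W → Bool} {w : W → ℕ} {s : ℕ}

lemma isInduced2K2Free_of_adj_iff (hH : ∀ a b, H.Adj a b ↔ c a ≠ c b ∧ w a + w b ≤ s) :
    IsInduced2K2Free H := by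
  intro a b x y hab hxy
  simp only [hH] at *
  -- One of the two cross matchings `{ax, by}`, `{ay, bx}` joins opposite colours,
  -- and its two weight sums add up to at most `2 s`.
  cases hca : c a <;> cases hcx : c x <;> simp_all <;> omega

lemma isChordal_compl_of_adj_iff (hH : ∀ a b, H.Adj a b ↔ c a ≠ c b ∧ w a + w b ≤ s) :
    IsChordal Hᶜ := by
  rintro m hm ⟨f, hf⟩
  rcases hm.eq_or_lt with rfl | hm5
  · exact not_isInducedCycle_compl_four (isInduced2K2Free_of_adj_iff hH) f hf
  · exact not_isInducedCycle_compl_of_bipartite c (fun a b h => ((hH a b).1 h).1) hm5 f hf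

end Threshold

lemma jetGraph_starGraph_adj_iff (n s : ℕ) (p q : Fin (n + 1) × Fin (s + 1)) :
    (jetGraph (starGraph n) s).Adj p q ↔
      decide (p.1 = 0) ≠ decide (q.1 = 0) ∧ p.2.val + q.2.val ≤ s := by
  simp only [jetGraph, starGraph, ne_eq, decide_eq_decide]
  grind

theorem jetGraph_star_cochordal_general (n s : ℕ) :
    IsChordal ((jetGraph (starGraph n) s)ᶜ) :=
  isChordal_compl_of_adj_iff (jetGraph_starGraph_adj_iff n s)

theorem jetGraph_star_cochordal (n s : ℕ) (hn : 2 ≤ n) :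
    IsChordal ((jetGraph (starGraph n) s)ᶜ) :=
  jetGraph_star_cochordal_general n s
end

section
/- For integers n ≥ 1, s ≥ 0, and each p ∈ {0,...,s+1}, the set C_p = ({x_1,...,x_n} × {0,...,s-p}) ∪ ({y_1,...,y_n} × {0,...,p-1}) is a minimal vertex cover of the jet graph J_s(K_{n,n}) of cardinality n(s+1). -/
/-- `C` is a vertex cover of `H`. -/
def IsVertexCover {W : Type*} (H : SimpleGraph W) (C : Set W) : Prop :=
  ∀ a b : W, H.Adj a b → a ∈ C ∨ b ∈ C

/-- `C` is a minimal vertex cover of `H`. -/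
def IsMinimalVertexCover {W : Type*} (H : SimpleGraph W) (C : Set W) : Prop :=
  IsVertexCover H C ∧ ∀ D : Set W, D ⊂ C → ¬ IsVertexCover H D

/-- The cover `C_p` of `Jₛ(K_{n,n})`: the `x`-vertices with index `≤ s - p`
together with the `y`-vertices with index `≤ p - 1`. -/
def bipartiteJetCover (n s p : ℕ) : Set ((Fin n ⊕ Fin n) × Fin (s + 1)) :=
  {q | (q.1.isLeft = true ∧ q.2.val + p ≤ s) ∨ (q.1.isRight = true ∧ q.2.val < p)}
/-!
An edge of `Jₛ(K_{n,n})` joins `(x, i)` and `(y, j)` with `i + j ≤ s`; if `(x, i) ∉ C_p` then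
`i > s - p`, so `j < p` and `(y, j) ∈ C_p`. The cover is minimal because every vertex of `C_p` has
a neighbour outside `C_p`: `(x, i)` is joined to `(y, p)` and `(y, i)` to `(x, s - i)`. Counting
levels, `C_p` has `n (s + 1 - p) + n p` vertices.
-/

theorem IsVertexCover.isMinimalVertexCover_of_forall_exists_adj_notMem {W : Type*}
    {H : SimpleGraph W} {C : Set W} (hC : IsVertexCover H C)
    (hnbr : ∀ v ∈ C, ∃ w, H.Adj v w ∧ w ∉ C) : IsMinimalVertexCover H C := by
  refine ⟨hC, fun D hDC hD => ?_⟩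
  obtain ⟨v, hvC, hvD⟩ := Set.exists_of_ssubset hDC
  obtain ⟨w, hvw, hwC⟩ := hnbr v hvC
  exact (hD v w hvw).elim hvD fun hwD => hwC (hDC.subset hwD)

def sumJetCover (α β : Type*) (s p : ℕ) : Set ((α ⊕ β) × Fin (s + 1)) :=
  {q | (q.1.isLeft = true ∧ q.2.val + p ≤ s) ∨ (q.1.isRight = true ∧ q.2.val < p)}

section sumJetCover

variable {α β : Type*} {s p : ℕ}

@[simp]
theorem inl_mem_sumJetCover {a : α} {i : Fin (s + 1)} :
    (Sum.inl a, i) ∈ sumJetCover α β s p ↔ i.val + p ≤ s := by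
  simp [sumJetCover]

@[simp]
theorem inr_mem_sumJetCover {b : β} {i : Fin (s + 1)} :
    (Sum.inr b, i) ∈ sumJetCover α β s p ↔ i.val < p := by
  simp [sumJetCover]

theorem sumJetCover_isVertexCover :
    IsVertexCover (jetGraph (completeBipartiteGraph α β) s) (sumJetCover α β s p) := by
  rintro ⟨a | b, i⟩ ⟨a' | b', j⟩ ⟨hadj, hij⟩
  · simp at hadj
  · simp only [inl_mem_sumJetCover, inr_mem_sumJetCover]
    dsimp only at hij
    omega
  · simp only [inl_mem_sumJetCover, inr_mem_sumJetCover]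
    dsimp only at hij
    omega
  · simp at hadj

theorem exists_jetGraph_adj_notMem_sumJetCover [Nonempty α] [Nonempty β] :
    ∀ v ∈ sumJetCover α β s p, ∃ w, (jetGraph (completeBipartiteGraph α β) s).Adj v w ∧
      w ∉ sumJetCover α β s p := by
  rintro ⟨a | b, i⟩ hv
  · rw [inl_mem_sumJetCover] at hv
    refine ⟨(Sum.inr (Classical.arbitrary β), ⟨p, by omega⟩), ⟨by simp, hv⟩, by simp⟩
  · rw [inr_mem_sumJetCover] at hv
    refine ⟨(Sum.inl (Classical.arbitrary α), ⟨s - i, by omega⟩), ⟨by simp, by simp; omega⟩, ?_⟩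
    simp only [inl_mem_sumJetCover]
    omega

theorem sumJetCover_isMinimalVertexCover [Nonempty α] [Nonempty β] :
    IsMinimalVertexCover (jetGraph (completeBipartiteGraph α β) s) (sumJetCover α β s p) :=
  sumJetCover_isVertexCover.isMinimalVertexCover_of_forall_exists_adj_notMem
    exists_jetGraph_adj_notMem_sumJetCover

open Finset in
theorem ncard_sumJetCover [Fintype α] [Fintype β] (hp : p ≤ s + 1) :
    (sumJetCover α β s p).ncard = Fintype.card α * (s + 1 - p) + Fintype.card β * p := by
  classical
  have hleft : #{i : Fin (s + 1) | i.val + p ≤ s} = s + 1 - p := by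
    rw [← min_eq_right (Nat.sub_le (s + 1) p), ← Fin.card_filter_val_lt]
    congr 1
    ext i
    simp only [Finset.mem_filter, Finset.mem_univ, true_and]
    omega
  have hright : #{i : Fin (s + 1) | i.val < p} = p := by
    rw [Fin.card_filter_val_lt, min_eq_right hp]
  rw [Set.ncard_eq_toFinset_card', sumJetCover, Set.toFinset_ofPred, Finset.card_filter,
    Fintype.sum_prod_type, Fintype.sum_sum_type]
  simp only [Sum.isLeft_inl, Sum.isRight_inl, Sum.isLeft_inr, Sum.isRight_inr, Bool.false_eq_true,
    true_and, false_and, or_false, false_or, Finset.sum_boole, Finset.sum_const, Finset.card_univ,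
    smul_eq_mul, Nat.cast_id, hleft, hright]

end sumJetCover

theorem bipartiteJetCover_eq_sumJetCover (n s p : ℕ) :
    bipartiteJetCover n s p = sumJetCover (Fin n) (Fin n) s p :=
  rfl

theorem jetGraph_bipartite_cover_minimal (n s p : ℕ) (hn : 1 ≤ n) (hp : p ≤ s + 1) :
    IsMinimalVertexCover (jetGraph (completeBipartiteGraph (Fin n) (Fin n)) s)
      (bipartiteJetCover n s p) ∧
    (bipartiteJetCover n s p).ncard = n * (s + 1) := by
  have : Nonempty (Fin n) := ⟨⟨0, hn⟩⟩
  rw [bipartiteJetCover_eq_sumJetCover]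
  refine ⟨sumJetCover_isMinimalVertexCover, ?_⟩
  rw [ncard_sumJetCover hp, Fintype.card_fin, ← mul_add, Nat.sub_add_cancel hp]
end

section
/- For integers n ≥ 1 and s ≥ 0, every minimal vertex cover of J_s(K_{n,n}) equals C_p for some p ∈ {0,...,s+1}, where C_p = ({x_1,...,x_n} × {0,...,s-p}) ∪ ({y_1,...,y_n} × {0,...,p-1}). -/
/-
A vertex lies in a minimal vertex cover `C` iff it has a neighbour outside `C`. In `Jₛ(K_{n,n})`
this makes `(y_j, u) ∈ C` equivalent to "some `(x_k, v) ∉ C` has `u + v ≤ s`", a condition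
independent of `j` and downward closed in `u`; hence the `y`-part of `C` is
`{y_1,…,y_n} × {0,…,p-1}` for some `p`. Then `(x_i, t) ∈ C` iff some `(y_j, u)` with `u ≥ p`
satisfies `t + u ≤ s`, i.e. iff `t + p ≤ s`.
-/

open Finset

section VertexCover

variable {W : Type*} {H : SimpleGraph W} {C : Set W}

theorem IsVertexCover.diff_singleton (hC : IsVertexCover H C) {v : W}
    (hv : ∀ w, H.Adj v w → w ∈ C) : IsVertexCover H (C \ {v}) := by
  intro a b hab
  by_cases ha : a = v
  · subst ha
    exact Or.inr ⟨hv b hab, hab.ne.symm⟩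
  by_cases hb : b = v
  · subst hb
    exact Or.inl ⟨hv a hab.symm, hab.ne⟩
  rcases hC a b hab with h | h
  · exact Or.inl ⟨h, ha⟩
  · exact Or.inr ⟨h, hb⟩

theorem IsMinimalVertexCover.mem_iff_exists_adj_notMem (hC : IsMinimalVertexCover H C) (v : W) :
    v ∈ C ↔ ∃ w, H.Adj v w ∧ w ∉ C := by
  refine ⟨fun hv => ?_, fun ⟨w, hvw, hw⟩ => (hC.1 v w hvw).resolve_right hw⟩
  by_contra! hall
  exact hC.2 _ (Set.sdiff_singleton_ssubset.2 hv) (hC.1.diff_singleton hall)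

end VertexCover

section CompleteBipartite

variable {α β : Type*} {s : ℕ}

@[simp]
theorem jetGraph_completeBipartiteGraph_adj_inl_inr {a : α} {b : β} {t u : Fin (s + 1)} :
    (jetGraph (completeBipartiteGraph α β) s).Adj (.inl a, t) (.inr b, u) ↔ t.val + u.val ≤ s := by
  simp [jetGraph]

@[simp]
theorem jetGraph_completeBipartiteGraph_adj_inr_inl {a : α} {b : β} {t u : Fin (s + 1)} :
    (jetGraph (completeBipartiteGraph α β) s).Adj (.inr b, u) (.inl a, t) ↔ u.val + t.val ≤ s := by
  simp [jetGraph]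

@[simp]
theorem jetGraph_completeBipartiteGraph_not_adj_inl_inl {a a' : α} {t t' : Fin (s + 1)} :
    ¬ (jetGraph (completeBipartiteGraph α β) s).Adj (.inl a, t) (.inl a', t') := by
  simp [jetGraph]

@[simp]
theorem jetGraph_completeBipartiteGraph_not_adj_inr_inr {b b' : β} {u u' : Fin (s + 1)} :
    ¬ (jetGraph (completeBipartiteGraph α β) s).Adj (.inr b, u) (.inr b', u') := by
  simp [jetGraph]

namespace IsMinimalVertexCover

variable {C : Set ((α ⊕ β) × Fin (s + 1))}

theorem inl_mem_iff (hC : IsMinimalVertexCover (jetGraph (completeBipartiteGraph α β) s) C)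
    (a : α) (t : Fin (s + 1)) :
    (.inl a, t) ∈ C ↔ ∃ (b : β) (u : Fin (s + 1)), (.inr b, u) ∉ C ∧ t.val + u.val ≤ s := by
  rw [hC.mem_iff_exists_adj_notMem]
  simp [and_comm]

theorem inr_mem_iff (hC : IsMinimalVertexCover (jetGraph (completeBipartiteGraph α β) s) C)
    (b : β) (u : Fin (s + 1)) :
    (.inr b, u) ∈ C ↔ ∃ (a : α) (t : Fin (s + 1)), (.inl a, t) ∉ C ∧ u.val + t.val ≤ s := by
  rw [hC.mem_iff_exists_adj_notMem]
  simp [and_comm]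

theorem exists_inr_mem_iff_lt
    (hC : IsMinimalVertexCover (jetGraph (completeBipartiteGraph α β) s) C) :
    ∃ p ≤ s + 1, ∀ (b : β) (u : Fin (s + 1)), (.inr b, u) ∈ C ↔ u.val < p := by
  classical
  let P (u : Fin (s + 1)) : Prop := ∃ (a : α) (t : Fin (s + 1)), (.inl a, t) ∉ C ∧ u.val + t.val ≤ s
  have hP : ∀ u u', u' ≤ u → P u → P u' := fun u u' hle ⟨a, t, ht, hsum⟩ =>
    ⟨a, t, ht, by omega⟩
  refine ⟨#{u | P u}, card_le_univ _ |>.trans_eq (Fintype.card_fin _), fun b u => ?_⟩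
  rw [hC.inr_mem_iff, Fin.lt_card_filter_univ_iff_apply_of_imp P hP]

theorem inl_mem_iff_add_le [Nonempty β]
    (hC : IsMinimalVertexCover (jetGraph (completeBipartiteGraph α β) s) C) {p : ℕ}
    (hp : ∀ (b : β) (u : Fin (s + 1)), (.inr b, u) ∈ C ↔ u.val < p) (a : α) (t : Fin (s + 1)) :
    (.inl a, t) ∈ C ↔ t.val + p ≤ s := by
  simp only [hC.inl_mem_iff, hp, not_lt, exists_const]
  constructor
  · rintro ⟨u, hpu, hsum⟩
    omega
  · intro hsum
    exact ⟨⟨p, by omega⟩, le_rfl, hsum⟩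

end IsMinimalVertexCover

end CompleteBipartite

theorem jetGraph_bipartite_cover_classification_general (n s : ℕ)
    (C : Set ((Fin n ⊕ Fin n) × Fin (s + 1)))
    (hC : IsMinimalVertexCover (jetGraph (completeBipartiteGraph (Fin n) (Fin n)) s) C) :
    ∃ p : ℕ, p ≤ s + 1 ∧ C = bipartiteJetCover n s p := by
  obtain ⟨p, hps, hp⟩ := hC.exists_inr_mem_iff_lt
  refine ⟨p, hps, ?_⟩
  ext ⟨a | b, t⟩
  · have : Nonempty (Fin n) := ⟨a⟩
    simp [bipartiteJetCover, hC.inl_mem_iff_add_le hp]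
  · simp [bipartiteJetCover, hp]

theorem jetGraph_bipartite_cover_classification (n s : ℕ) (hn : 1 ≤ n)
    (C : Set ((Fin n ⊕ Fin n) × Fin (s + 1)))
    (hC : IsMinimalVertexCover (jetGraph (completeBipartiteGraph (Fin n) (Fin n)) s) C) :
    ∃ p : ℕ, p ≤ s + 1 ∧ C = bipartiteJetCover n s p :=
  jetGraph_bipartite_cover_classification_general n s C hC
end

section
/- For all integers n ≥ 1 and s ≥ 0, the jet graph J_s(K_{n,n}) is very well covered: every minimal vertex cover of J_s(K_{n,n}) has cardinality n(s+1), which is half the number of its vertices. -/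
/-!
Pair each vertex `(v, i)` with its partner `(v.swap, s - i)`. These pairs are edges of
`J_s(K_{n,n})` and partition the vertex set, so a vertex cover contains at least one vertex of
each pair. A minimal cover never contains both: every vertex of a minimal cover has a neighbour
outside it, and any neighbour `(w, j)` of `(v, i)` is adjacent to any neighbour `(w', k)` of
`(v.swap, s - i)`, because `j ≤ s - i` and `k ≤ i`. Hence a minimal cover contains exactly one
vertex of each pair, i.e. half of the vertices.
-/

section VertexCover

variable {W : Type*} {H : SimpleGraph W} {C : Set W}

theorem IsMinimalVertexCover.exists_adj_notMem (hC : IsMinimalVertexCover H C) {v : W}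
    (hv : v ∈ C) : ∃ w, H.Adj v w ∧ w ∉ C := by
  by_contra! h
  refine hC.2 (C \ {v}) (Set.sdiff_singleton_ssubset.mpr hv) fun a b hab => ?_
  by_cases ha : a = v
  · subst ha
    exact Or.inr ⟨h b hab, (H.ne_of_adj hab).symm⟩
  by_cases hb : b = v
  · subst hb
    exact Or.inl ⟨h a hab.symm, ha⟩
  · exact (hC.1 a b hab).imp (fun h => ⟨h, ha⟩) fun h => ⟨h, hb⟩

theorem IsMinimalVertexCover.notMem_of_forall_adj (hC : IsMinimalVertexCover H C) {x y : W}
    (hxy : ∀ x' y', H.Adj x x' → H.Adj y y' → H.Adj x' y') (hx : x ∈ C) : y ∉ C := by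
  intro hy
  obtain ⟨x', hxx', hx'⟩ := hC.exists_adj_notMem hx
  obtain ⟨y', hyy', hy'⟩ := hC.exists_adj_notMem hy
  exact (hC.1 x' y' (hxy x' y' hxx' hyy')).elim hx' hy'

end VertexCover

theorem two_mul_ncard_eq_of_mem_iff_notMem {W : Type*} [Finite W] {σ : W → W}
    (hσ : Function.Involutive σ) {C : Set W} (hC : ∀ v, v ∈ C ↔ σ v ∉ C) :
    2 * C.ncard = Nat.card W := by
  have hpreimage : (σ ⁻¹' Cᶜ).ncard = Cᶜ.ncard :=
    Set.ncard_preimage_of_injective_subset_range hσ.injective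
      (by simp [hσ.surjective.range_eq])
  rw [show σ ⁻¹' Cᶜ = C from (Set.ext hC).symm] at hpreimage
  have := Set.ncard_add_ncard_compl C
  omega

section JetGraph

variable {α : Type*} {s : ℕ}

def jetPartner (s : ℕ) (p : (α ⊕ α) × Fin (s + 1)) : (α ⊕ α) × Fin (s + 1) :=
  (p.1.swap, p.2.rev)

theorem jetPartner_involutive : Function.Involutive (jetPartner (α := α) s) := by
  intro p
  simp [jetPartner]

theorem jetGraph_adj_jetPartner (p : (α ⊕ α) × Fin (s + 1)) :
    (jetGraph (completeBipartiteGraph α α) s).Adj p (jetPartner s p) := by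
  obtain ⟨v | v, i⟩ := p <;> simp [jetGraph, jetPartner, Fin.val_rev] <;> omega

theorem jetGraph_adj_of_adj_of_adj_jetPartner {p q r : (α ⊕ α) × Fin (s + 1)}
    (hq : (jetGraph (completeBipartiteGraph α α) s).Adj p q)
    (hr : (jetGraph (completeBipartiteGraph α α) s).Adj (jetPartner s p) r) :
    (jetGraph (completeBipartiteGraph α α) s).Adj q r := by
  obtain ⟨hpq, hi⟩ := hq
  obtain ⟨hpr, hj⟩ := hr
  refine ⟨?_, ?_⟩
  · obtain ⟨v | v, i⟩ := p <;> obtain ⟨w | w, j⟩ := q <;> obtain ⟨u | u, k⟩ := r <;>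
      simp_all [jetPartner]
  · simp only [jetPartner, Fin.val_rev] at hj
    omega

theorem IsMinimalVertexCover.mem_iff_jetPartner_notMem
    {C : Set ((α ⊕ α) × Fin (s + 1))}
    (hC : IsMinimalVertexCover (jetGraph (completeBipartiteGraph α α) s) C)
    (p : (α ⊕ α) × Fin (s + 1)) : p ∈ C ↔ jetPartner s p ∉ C :=
  ⟨hC.notMem_of_forall_adj fun _ _ => jetGraph_adj_of_adj_of_adj_jetPartner,
    fun h => (hC.1 _ _ (jetGraph_adj_jetPartner p)).resolve_right h⟩

end JetGraph

theorem jetGraph_bipartite_very_well_covered_general (n s : ℕ)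
    (C : Set ((Fin n ⊕ Fin n) × Fin (s + 1)))
    (hC : IsMinimalVertexCover (jetGraph (completeBipartiteGraph (Fin n) (Fin n)) s) C) :
    C.ncard = n * (s + 1) ∧
    2 * (n * (s + 1)) = Fintype.card ((Fin n ⊕ Fin n) × Fin (s + 1)) := by
  have hcard : Fintype.card ((Fin n ⊕ Fin n) × Fin (s + 1)) = 2 * (n * (s + 1)) := by
    simp only [Fintype.card_prod, Fintype.card_sum, Fintype.card_fin]
    ring
  have hhalf := two_mul_ncard_eq_of_mem_iff_notMem jetPartner_involutive
    hC.mem_iff_jetPartner_notMem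
  rw [Nat.card_eq_fintype_card, hcard] at hhalf
  exact ⟨by omega, hcard.symm⟩

theorem jetGraph_bipartite_very_well_covered (n s : ℕ) (hn : 1 ≤ n)
    (C : Set ((Fin n ⊕ Fin n) × Fin (s + 1)))
    (hC : IsMinimalVertexCover (jetGraph (completeBipartiteGraph (Fin n) (Fin n)) s) C) :
    C.ncard = n * (s + 1) ∧
    2 * (n * (s + 1)) = Fintype.card ((Fin n ⊕ Fin n) × Fin (s + 1)) :=
  jetGraph_bipartite_very_well_covered_general n s C hC
end

section
/- For a connected simple graph G with at least one edge and any natural number s, the distance in J_s(G) between any two vertices (a,i) and (b,j) is at most the distance in G between a and b plus 2. -/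
namespace jetGraph

variable {V : Type*} {G : SimpleGraph V} {s : ℕ} {a b : V}

theorem adj_zero_right (h : G.Adj a b) (i : Fin (s + 1)) : (jetGraph G s).Adj (a, i) (b, 0) :=
  ⟨h, by simp [Nat.le_of_lt_succ i.isLt]⟩

theorem adj_zero_left (h : G.Adj a b) (j : Fin (s + 1)) : (jetGraph G s).Adj (a, 0) (b, j) :=
  (adj_zero_right h.symm j).symm

theorem exists_walk_from_zero_length_eq :
    ∀ {a b : V} (w : G.Walk a b), w.length ≠ 0 → ∀ j : Fin (s + 1),
      ∃ w' : (jetGraph G s).Walk (a, 0) (b, j), w'.length = w.length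
  | _, _, .nil, hw, _ => absurd rfl hw
  | _, _, .cons h .nil, _, j => ⟨.cons (adj_zero_left h j) .nil, rfl⟩
  | _, _, .cons h (.cons h' q), _, j =>
    have ⟨w', hw'⟩ := exists_walk_from_zero_length_eq (.cons h' q) (by simp) j
    ⟨.cons (adj_zero_left h 0) w', by simp [hw']⟩

theorem exists_walk_length_eq :
    ∀ {a b : V} (w : G.Walk a b), 2 ≤ w.length → ∀ i j : Fin (s + 1),
      ∃ w' : (jetGraph G s).Walk (a, i) (b, j), w'.length = w.length
  | _, _, .nil, hw, _, _ => absurd hw (by simp)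
  | _, _, .cons h q, hw, i, j =>
    have ⟨w', hw'⟩ := exists_walk_from_zero_length_eq q (by simp at hw; omega) j
    ⟨.cons (adj_zero_right h i) w', by simp [hw']⟩

end jetGraph

theorem jetGraph_dist_le {V : Type*} (G : SimpleGraph V) (hG : G.Connected)
    (hedge : ∃ x y : V, G.Adj x y) (s : ℕ) (a b : V) (i j : Fin (s + 1)) :
    (jetGraph G s).dist (a, i) (b, j) ≤ G.dist a b + 2 := by
  obtain ⟨x, y, hxy⟩ := hedge
  have := hxy.nontrivial
  obtain ⟨z, hbz⟩ := hG.preconnected.exists_adj_of_nontrivial b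
  obtain ⟨p, hp⟩ := hG.exists_walk_length_eq_dist a b
  let detour : G.Walk a b := (p.concat hbz).concat hbz.symm
  have hdetour : detour.length = G.dist a b + 2 := by simp [detour, hp]
  obtain ⟨w, hw⟩ := jetGraph.exists_walk_length_eq detour (by omega) i j
  calc (jetGraph G s).dist (a, i) (b, j) ≤ w.length := SimpleGraph.dist_le w
    _ = G.dist a b + 2 := hw.trans hdetour
end
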